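/- arXiv:2205.13859 — 5 statements merged into one kernel-verified Lean document; each statement's English description precedes it below -/
import Mathlib

section
/- If f : X → ℂ is harmonic on X and belongs to ℓ^p of the counting measure for some 1 ≤ p < ∞ (i.e. Σ_{x∈X} |f(x)|^p < ∞), then f is identically zero. -/
open scoped BigOperators
open scoped Classical

namespace TreeBergman

variable {V : Type*}

/-- Harmonicity at a vertex: (q+1) f(v) = Σ_{u ∼ v} f(u). -/
def HarmonicAt (G : SimpleGraph V) [G.LocallyFinite] (q : ℕ) (f : V → ℂ) (v : V) : Prop :=
  ((q : ℂ) + 1) * f v = ∑ u ∈ G.neighborFinset v, f u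

/-- Harmonicity on all of X. -/
def Harmonic (G : SimpleGraph V) [G.LocallyFinite] (q : ℕ) (f : V → ℂ) : Prop :=
  ∀ v, HarmonicAt G q f v

/-- The sector T_v: the set of x such that v lies on the geodesic from o to x. -/
def sector (G : SimpleGraph V) (o v : V) : Set V :=
  {x | G.dist o x = G.dist o v + G.dist v x}

/-- Successors of v. -/
noncomputable def succs (G : SimpleGraph V) [G.LocallyFinite] (o v : V) : Finset V :=
  (G.neighborFinset v).filter fun u => G.dist o u = G.dist o v + 1

/-- a_n = Σ_{j=0}^n q^{-j}. -/
noncomputable def aseq (q : ℕ) (n : ℕ) : ℝ :=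
  ∑ j ∈ Finset.range (n + 1), ((q : ℝ)⁻¹) ^ j

/-- b_n = Σ_{m=n+1}^∞ σ_m a_{m-n-1} (Σ_{k=0}^{m-n-1} q^k), for radial density w. -/
noncomputable def bseq (q : ℕ) (w : ℕ → ℝ) (n : ℕ) : ℝ :=
  ∑' ℓ : ℕ, w (n + 1 + ℓ) * aseq q ℓ * ∑ k ∈ Finset.range (ℓ + 1), (q : ℝ) ^ k

/-- pred is the predecessor function. -/
def IsPred (G : SimpleGraph V) (o : V) (pred : V → V) : Prop :=
  ∀ v, v ≠ o → G.Adj v (pred v) ∧ G.dist o (pred v) + 1 = G.dist o v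

/-- The harmonic extension g_n^H. -/
noncomputable def hext (G : SimpleGraph V) (o : V) (pred : V → V) (q : ℕ)
    (g : V → ℂ) (n : ℕ) (x : V) : ℂ :=
  if G.dist o x ≤ n then g x
  else ((aseq q (G.dist o x - n - 1) : ℝ) : ℂ) * g (pred^[G.dist o x - n - 1] x)
      - ((aseq q (G.dist o x - n - 1) - 1 : ℝ) : ℂ) * g (pred^[G.dist o x - n] x)

/-- The auxiliary function Γ. -/
noncomputable def Gam (G : SimpleGraph V) [G.LocallyFinite] (o : V) (v z x : V) : ℝ :=
  if (z ∈ sector G o v ∧ z ≠ v) ∧ (x ∈ sector G o v ∧ x ≠ v) then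
    if ∃ y ∈ succs G o v, z ∈ sector G o y ∧ x ∈ sector G o y then
      (((succs G o v).card : ℝ) - 1) / ((succs G o v).card : ℝ)
    else -1 / ((succs G o v).card : ℝ)
  else 0

/-- The 𝒜²(σ) inner product with density σ. -/
noncomputable def ip (σ : V → ℝ) (f g : V → ℂ) : ℂ :=
  ∑' x, f x * (starRingEnd ℂ) (g x) * (σ x : ℂ)

/-- The weight q^{-α|x|}. -/
noncomputable def expw (q : ℕ) (G : SimpleGraph V) (o : V) (α : ℝ) (x : V) : ℝ :=
  (q : ℝ) ^ (-(α * (G.dist o x : ℝ)))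

/-- K is the reproducing kernel of 𝒜²_γ. -/
def IsRK (G : SimpleGraph V) [G.LocallyFinite] (q : ℕ) (o : V) (γ : ℝ)
    (K : V → V → ℝ) : Prop :=
  ∀ z : V,
    Harmonic G q (fun x => (K z x : ℂ)) ∧
    Summable (fun x => (K z x) ^ 2 * expw q G o γ x) ∧
    ∀ g : V → ℂ, Harmonic G q g →
      Summable (fun x => ‖g x‖ ^ 2 * expw q G o γ x) →
      Summable (fun x => g x * ((K z x : ℂ)) * ((expw q G o γ x : ℝ) : ℂ)) ∧
      ∑' x, g x * ((K z x : ℂ)) * ((expw q G o γ x : ℝ) : ℂ) = g z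

/-- Integral operator with real kernel acting on complex functions. -/
noncomputable def applyKer (ker : V → V → ℝ) (f : V → ℂ) (z : V) : ℂ :=
  ∑' x, (ker z x : ℂ) * f x

/-- Boundedness on L^p of the weight w of the integral operator with kernel ker. -/
def BddOn (p : ℝ) (w : V → ℝ) (ker : V → V → ℝ) : Prop :=
  ∃ C : ℝ, 0 < C ∧ ∀ f : V → ℂ, Summable (fun x => ‖f x‖ ^ p * w x) →
    Summable (fun z => ‖applyKer ker f z‖ ^ p * w z) ∧
    ∑' z, ‖applyKer ker f z‖ ^ p * w z ≤ C * ∑' x, ‖f x‖ ^ p * w x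

end TreeBergman

/-! If `f ≠ 0`, summability of `‖f‖ ^ p` forces `f → 0` at infinity, so `‖f‖` attains a positive
maximum. By the maximum principle a harmonic function attaining its maximal modulus has constant
modulus, which contradicts `f → 0` since a regular tree of degree at least two is infinite. -/

open SimpleGraph Filter Topology

section MaximumPrinciple

variable {V : Type*} {G : SimpleGraph V} [G.LocallyFinite]

lemma SimpleGraph.eq_of_adj_of_forall_le_of_subharmonicAt {h : V → ℝ} {x y : V}
    (hsub : G.degree x * h x ≤ ∑ u ∈ G.neighborFinset x, h u) (hmax : ∀ u, h u ≤ h x)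
    (hxy : G.Adj x y) : h y = h x := by
  by_contra hne
  have hlt : ∑ u ∈ G.neighborFinset x, h u < ∑ _u ∈ G.neighborFinset x, h x :=
    Finset.sum_lt_sum (fun u _ => hmax u) ⟨y, (G.mem_neighborFinset x y).2 hxy,
      lt_of_le_of_ne (hmax y) hne⟩
  rw [Finset.sum_const, card_neighborFinset_eq_degree, nsmul_eq_mul] at hlt
  exact hsub.not_gt hlt

lemma SimpleGraph.Connected.eq_of_forall_le_of_subharmonic (hG : G.Connected) {h : V → ℝ}
    (hsub : ∀ x, G.degree x * h x ≤ ∑ u ∈ G.neighborFinset x, h u) {v : V}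
    (hmax : ∀ x, h x ≤ h v) (x : V) : h x = h v := by
  induction (reachable_iff_reflTransGen v x).1 (hG v x) with
  | refl => rfl
  | tail _ hadj ih =>
    exact (eq_of_adj_of_forall_le_of_subharmonicAt (hsub _) (ih ▸ hmax) hadj).trans ih

end MaximumPrinciple

lemma SimpleGraph.IsTree.infinite_of_isRegularOfDegree {V : Type*} {G : SimpleGraph V}
    [G.LocallyFinite] (hT : G.IsTree) {d : ℕ} (hreg : G.IsRegularOfDegree d) (hd : 2 ≤ d) :
    Infinite V := by
  by_contra hfin
  have : Finite V := not_infinite_iff_finite.1 hfin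
  obtain ⟨v⟩ := hT.connected.nonempty
  obtain ⟨w, hvw⟩ := (G.degree_pos_iff_exists_adj v).1 (by rw [hreg.degree_eq]; omega)
  have : Nontrivial V := ⟨⟨v, w, hvw.ne⟩⟩
  obtain ⟨u, -, -, hu, -⟩ := hT.exists_ne_and_degree_eq_one
  rw [hreg.degree_eq] at hu
  omega

namespace TreeBergman

variable {V : Type*} {G : SimpleGraph V} [G.LocallyFinite] {q : ℕ} {f : V → ℂ}

lemma HarmonicAt.re_mul {v : V} (hf : HarmonicAt G q f v) (c : ℂ) :
    ((q : ℝ) + 1) * (c * f v).re = ∑ u ∈ G.neighborFinset v, (c * f u).re := by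
  have := congrArg (fun z => (c * z).re) hf
  simp only [Finset.mul_sum, Complex.re_sum] at this
  rw [← this, mul_left_comm, ← Complex.ofReal_natCast, ← Complex.ofReal_one,
    ← Complex.ofReal_add, Complex.re_ofReal_mul]

/-- The maximum principle, applied to the real harmonic function `x ↦ Re (conj (f v) * f x)`,
which is at most `‖f v‖²` and attains this value at `v`. -/
lemma Harmonic.norm_eq_of_forall_norm_le (hG : G.Connected) (hreg : G.IsRegularOfDegree (q + 1))
    (hf : Harmonic G q f) {v : V} (hmax : ∀ x, ‖f x‖ ≤ ‖f v‖) (x : V) : ‖f x‖ = ‖f v‖ := by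
  set h : V → ℝ := fun x => (starRingEnd ℂ (f v) * f x).re
  have hle : ∀ x, h x ≤ ‖f v‖ * ‖f x‖ := fun x => by
    simpa only [norm_mul, Complex.norm_conj] using Complex.re_le_norm (starRingEnd ℂ (f v) * f x)
  have hv : h v = ‖f v‖ * ‖f v‖ := by
    simp only [h, mul_comm (starRingEnd ℂ _), Complex.mul_conj, Complex.normSq_eq_norm_sq,
      Complex.ofReal_re, sq]
  have hsub : ∀ x, G.degree x * h x ≤ ∑ u ∈ G.neighborFinset x, h u := fun x => by
    rw [hreg.degree_eq, ← (hf x).re_mul]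
    push_cast
    rfl
  have hhmax : ∀ x, h x ≤ h v := fun x =>
    hv ▸ (hle x).trans (mul_le_mul_of_nonneg_left (hmax x) (norm_nonneg _))
  have hx := hle x
  rw [hG.eq_of_forall_le_of_subharmonic hsub hhmax x, hv] at hx
  nlinarith [hmax x, norm_nonneg (f x), norm_nonneg (f v)]

end TreeBergman

lemma exists_forall_le_of_tendsto_cofinite_zero {α : Type*} {g : α → ℝ}
    (hg : Tendsto g cofinite (𝓝 0)) {x₀ : α} (hx₀ : 0 < g x₀) : ∃ v, ∀ x, g x ≤ g v := by
  have hfin : {x | g x₀ ≤ g x}.Finite := by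
    simpa only [not_lt] using eventually_cofinite.1 (hg.eventually (gt_mem_nhds hx₀))
  obtain ⟨v, hv, hvmax⟩ := Set.exists_max_image _ g hfin ⟨x₀, le_refl (g x₀)⟩
  exact ⟨v, fun x => (le_total (g x₀) (g x)).elim (hvmax x) fun hx => hx.trans hv⟩

open TreeBergman in
/-- A harmonic function on a q-homogeneous tree (q ≥ 2) belonging to
ℓ^p of the counting measure for some 1 ≤ p < ∞ is identically zero. -/
theorem statement0
    {V : Type*} (G : SimpleGraph V) [G.LocallyFinite] (q : ℕ) (hq : 2 ≤ q)
    (hconn : G.Connected) (hacyc : G.IsAcyclic)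
    (hreg : G.IsRegularOfDegree (q + 1))
    (f : V → ℂ) (p : ℝ) (hp : 1 ≤ p)
    (hharm : Harmonic G q f)
    (hsum : Summable fun x => ‖f x‖ ^ p) :
    f = 0 := by
  by_contra hf0
  have hp0 : 0 < p := by linarith
  have hlim := hsum.tendsto_cofinite_zero
  obtain ⟨x₀, hx₀⟩ := Function.ne_iff.1 hf0
  have hx₀p : 0 < ‖f x₀‖ ^ p := Real.rpow_pos_of_pos (norm_pos_iff.2 hx₀) p
  obtain ⟨v, hv⟩ := exists_forall_le_of_tendsto_cofinite_zero hlim hx₀p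
  have hmax : ∀ x, ‖f x‖ ≤ ‖f v‖ := fun x =>
    (Real.rpow_le_rpow_iff (norm_nonneg _) (norm_nonneg _) hp0).1 (hv x)
  have hv0 : 0 < ‖f v‖ ^ p := hx₀p.trans_le (hv x₀)
  have : Infinite V := IsTree.infinite_of_isRegularOfDegree ⟨hconn, hacyc⟩ hreg (by omega)
  obtain ⟨x, hx⟩ := (hlim.eventually (gt_mem_nhds hv0)).exists
  rw [hharm.norm_eq_of_forall_norm_le hconn hreg hmax x] at hx
  exact hx.false
end

section
/- Let y ∈ X with y ≠ o. If f : X → ℂ is harmonic on the sector T_y, then for every integer n ≥ |y| one has Σ_{x ∈ T_y, |x| = n} f(x) = (Σ_{j=0}^{n-|y|} q^j) f(y) − (Σ_{j=0}^{n-|y|-1} q^j) f(p(y)). Conversely, if f : X → ℂ is radial on T_y (its value at x ∈ T_y depends only on |x|) and satisfies this identity for every n ≥ |y|, then f is harmonic on T_y. -/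
open scoped BigOperators
open scoped Classical

/-!
Write `S k` for the sum of `f` over the `k`-th sphere of the sector `T_y` and `Φ k` for the
flux `∑ (f v - f (pred v))` through it. Since every vertex of the sector has `q` successors,
`Φ (k + 1) = S (k + 1) - q S k`, while harmonicity summed over the `k`-th sphere gives
`S (k + 1) = q S k + Φ k`. So harmonic functions conserve the flux, `Φ k = f y - f (pred y)`,
and the first-order recurrence `S (k + 1) = q S k + Φ 0` is solved by the geometric sums.
Conversely the identity forces `Φ` to be constant; for a radial `f` the flux `Φ k` is `q ^ k`
times the increment `f v - f (pred v)` at any `v` on the `k`-th sphere, and the equality of two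
consecutive fluxes is precisely harmonicity at `v`.
-/

lemma geom_sum_closed_form_iff {R : Type*} [CommRing R] (r a b : R) (s : ℕ → R) :
    (∀ k, s k = (∑ j ∈ Finset.range (k + 1), r ^ j) * a - (∑ j ∈ Finset.range k, r ^ j) * b) ↔
      s 0 = a ∧ ∀ k, s (k + 1) = r * s k + (a - b) := by
  constructor
  · intro h
    refine ⟨by simpa using h 0, fun k => ?_⟩
    rw [h (k + 1), h k, geom_sum_succ (n := k + 1), geom_sum_succ (n := k)]
    ring
  · rintro ⟨h0, hs⟩ k
    induction k with
    | zero => simpa using h0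
    | succ k ih =>
      rw [hs, ih, geom_sum_succ (n := k + 1), geom_sum_succ (n := k)]
      ring

namespace SimpleGraph

variable {V : Type*} {G : SimpleGraph V}

lemma Walk.dist_le_length_of_mem_support {u v w : V} (p : G.Walk u v) (hw : w ∈ p.support) :
    G.dist u w ≤ p.length :=
  (dist_le _).trans (p.length_takeUntil_le_length hw)

lemma IsTree.eq_of_adj_of_dist_add_one (hG : G.IsTree) {o v u₁ u₂ : V}
    (h₁ : G.Adj u₁ v) (hd₁ : G.dist o u₁ + 1 = G.dist o v)
    (h₂ : G.Adj u₂ v) (hd₂ : G.dist o u₂ + 1 = G.dist o v) : u₁ = u₂ := by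
  obtain ⟨p₁, hp₁, hl₁⟩ := hG.connected.exists_path_of_dist o u₁
  obtain ⟨p₂, hp₂, hl₂⟩ := hG.connected.exists_path_of_dist o u₂
  have hv₁ : v ∉ p₁.support := fun hv => by
    have := p₁.dist_le_length_of_mem_support hv; omega
  have hv₂ : v ∉ p₂.support := fun hv => by
    have := p₂.dist_le_length_of_mem_support hv; omega
  have hp : (p₂.concat h₂).IsPath := hp₂.concat hv₂ h₂
  have hu₁ : u₁ ∈ (p₂.concat h₂).support :=
    hG.isAcyclic.mem_support_of_ne_mem_support_of_adj_of_isPath hp hp₁ h₁.symm hv₁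
  simpa using hG.isAcyclic.eq_penultimate_of_adj_end hp h₁.symm hu₁

end SimpleGraph

namespace TreeBergman

open SimpleGraph

variable {V : Type*} {G : SimpleGraph V}

section Pred

variable {o : V} {pred : V → V}

lemma mem_succs [G.LocallyFinite] {v u : V} :
    u ∈ succs G o v ↔ G.Adj v u ∧ G.dist o u = G.dist o v + 1 := by
  simp [succs]

lemma IsPred.eq_of_adj (hpred : IsPred G o pred) (hG : G.IsTree) {u v : V} (h : G.Adj u v)
    (hd : G.dist o u + 1 = G.dist o v) : u = pred v := by
  have hv : v ≠ o := by
    rintro rfl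
    simp at hd
  exact hG.eq_of_adj_of_dist_add_one h hd (hpred v hv).1.symm (hpred v hv).2

variable [G.LocallyFinite]

lemma IsPred.pred_eq_of_mem_succs (hpred : IsPred G o pred) (hG : G.IsTree) {u v : V}
    (hu : u ∈ succs G o v) : pred u = v := by
  obtain ⟨hadj, hd⟩ := mem_succs.1 hu
  exact (hpred.eq_of_adj hG hadj hd.symm).symm

lemma IsPred.pred_notMem_succs (hpred : IsPred G o pred) {v : V} (hv : v ≠ o) :
    pred v ∉ succs G o v := fun h => by
  have := (hpred v hv).2
  have := (mem_succs.1 h).2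
  omega

lemma IsPred.insert_pred_succs (hpred : IsPred G o pred) (hG : G.IsTree) {v : V} (hv : v ≠ o) :
    insert (pred v) (succs G o v) = G.neighborFinset v := by
  ext u
  simp only [Finset.mem_insert, mem_succs, mem_neighborFinset]
  constructor
  · rintro (rfl | ⟨hadj, -⟩)
    exacts [(hpred v hv).1, hadj]
  · intro hadj
    rcases hG.dist_eq_dist_add_one_of_adj o hadj with hd | hd
    · exact Or.inl (hpred.eq_of_adj hG hadj.symm hd.symm)
    · exact Or.inr ⟨hadj, hd⟩

lemma IsPred.sum_neighborFinset {M : Type*} [AddCommMonoid M] (hpred : IsPred G o pred)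
    (hG : G.IsTree) {v : V} (hv : v ≠ o) (f : V → M) :
    ∑ u ∈ G.neighborFinset v, f u = f (pred v) + ∑ u ∈ succs G o v, f u := by
  rw [← hpred.insert_pred_succs hG hv, Finset.sum_insert (hpred.pred_notMem_succs hv)]

lemma IsPred.card_succs (hpred : IsPred G o pred) (hG : G.IsTree) {q : ℕ}
    (hreg : G.IsRegularOfDegree (q + 1)) {v : V} (hv : v ≠ o) : (succs G o v).card = q := by
  have h := congrArg Finset.card (hpred.insert_pred_succs hG hv)
  rw [Finset.card_insert_of_notMem (hpred.pred_notMem_succs hv), card_neighborFinset_eq_degree,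
    hreg v] at h
  omega

end Pred

section Sector

variable {o y : V} {pred : V → V}

lemma mem_sector {x : V} : x ∈ sector G o y ↔ G.dist o x = G.dist o y + G.dist y x := Iff.rfl

lemma mem_sector_of_mem_succs [G.LocallyFinite] (hG : G.Connected) {v u : V}
    (hv : v ∈ sector G o y) (hu : u ∈ succs G o v) : u ∈ sector G o y := by
  obtain ⟨hadj, hd⟩ := mem_succs.1 hu
  have h₁ : G.dist y u ≤ G.dist y v + 1 := by
    simpa [dist_eq_one_iff_adj.2 hadj] using hG.dist_triangle (u := y) (v := v) (w := u)
  have h₂ : G.dist o u ≤ G.dist o y + G.dist y u := hG.dist_triangle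
  rw [mem_sector] at hv ⊢
  omega

lemma IsPred.pred_mem_sector (hpred : IsPred G o pred) (hG : G.IsTree) {x : V}
    (hx : x ∈ sector G o y) (hxy : x ≠ y) : pred x ∈ sector G o y := by
  rw [mem_sector] at hx ⊢
  have hyx : G.dist y x ≠ 0 := fun h => hxy ((hG.connected.dist_eq_zero_iff.1 h).symm)
  have hxo : x ≠ o := by
    rintro rfl
    rw [dist_self] at hx
    omega
  have hd := (hpred x hxo).2
  -- the first step of a geodesic from `x` back to `y` goes to `pred x`
  obtain ⟨r, hr⟩ := hG.connected.exists_walk_length_eq_dist x y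
  obtain ⟨u, hxu, t, rfl⟩ := Walk.exists_eq_cons_of_ne hxy r
  rw [Walk.length_cons, dist_comm] at hr
  have ht : G.dist y u ≤ t.length := dist_comm (G := G) ▸ dist_le t
  have h₁ : G.dist o u ≤ G.dist o y + G.dist y u := hG.connected.dist_triangle
  have h₂ : G.dist o x ≤ G.dist o u + 1 := by
    simpa [dist_eq_one_iff_adj.2 hxu.symm] using
      hG.connected.dist_triangle (u := o) (v := u) (w := x)
  obtain rfl : u = pred x := hpred.eq_of_adj hG hxu.symm (by omega)
  have h₃ : G.dist o (pred x) ≤ G.dist o y + G.dist y (pred x) := hG.connected.dist_triangle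
  omega

variable [G.LocallyFinite]

noncomputable def sectorSphere (G : SimpleGraph V) [G.LocallyFinite] (o y : V) : ℕ → Finset V
  | 0 => {y}
  | k + 1 => (sectorSphere G o y k).biUnion (succs G o)

lemma IsPred.mem_sectorSphere (hpred : IsPred G o pred) (hG : G.IsTree) {k : ℕ} {x : V} :
    x ∈ sectorSphere G o y k ↔ x ∈ sector G o y ∧ G.dist o x = G.dist o y + k := by
  induction k generalizing x with
  | zero =>
    simp only [sectorSphere, Finset.mem_singleton, add_zero]
    constructor
    · rintro rfl
      simp [mem_sector]
    · rintro ⟨hx, hd⟩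
      rw [mem_sector] at hx
      exact (hG.connected.dist_eq_zero_iff.1 (by omega)).symm
  | succ k ih =>
    simp only [sectorSphere, Finset.mem_biUnion]
    constructor
    · rintro ⟨v, hv, hx⟩
      obtain ⟨hvs, hvd⟩ := ih.1 hv
      exact ⟨mem_sector_of_mem_succs hG.connected hvs hx, by rw [(mem_succs.1 hx).2]; omega⟩
    · rintro ⟨hx, hd⟩
      have hxy : x ≠ y := by
        rintro rfl
        omega
      have hxo : x ≠ o := by
        rintro rfl
        simp at hd
      obtain ⟨hadj, hpd⟩ := hpred x hxo
      exact ⟨pred x, ih.2 ⟨hpred.pred_mem_sector hG hx hxy, by omega⟩,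
        mem_succs.2 ⟨hadj.symm, by omega⟩⟩

lemma IsPred.ne_of_mem_sectorSphere (hpred : IsPred G o pred) (hG : G.IsTree) (hy : y ≠ o)
    {k : ℕ} {x : V} (hx : x ∈ sectorSphere G o y k) : x ≠ o := by
  intro hxo
  have hd := ((hpred.mem_sectorSphere hG).1 hx).2
  rw [hxo, dist_self] at hd
  exact hy (hG.connected.dist_eq_zero_iff.1 (by omega)).symm

lemma IsPred.pred_mem_sectorSphere (hpred : IsPred G o pred) (hG : G.IsTree) {k : ℕ} {x : V}
    (hx : x ∈ sectorSphere G o y (k + 1)) : pred x ∈ sectorSphere G o y k := by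
  obtain ⟨v, hv, hxv⟩ := Finset.mem_biUnion.1 hx
  rwa [hpred.pred_eq_of_mem_succs hG hxv]

lemma IsPred.sum_sectorSphere_succ {M : Type*} [AddCommMonoid M] (hpred : IsPred G o pred)
    (hG : G.IsTree) (k : ℕ) (g : V → M) :
    ∑ x ∈ sectorSphere G o y (k + 1), g x = ∑ v ∈ sectorSphere G o y k, ∑ u ∈ succs G o v, g u :=
  Finset.sum_biUnion fun _ _ _ _ hne => Finset.disjoint_left.2 fun _ hu₁ hu₂ =>
    hne ((hpred.pred_eq_of_mem_succs hG hu₁).symm.trans (hpred.pred_eq_of_mem_succs hG hu₂))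

variable {q : ℕ}

lemma IsPred.card_sectorSphere (hpred : IsPred G o pred) (hG : G.IsTree)
    (hreg : G.IsRegularOfDegree (q + 1)) (hy : y ≠ o) (k : ℕ) :
    (sectorSphere G o y k).card = q ^ k := by
  induction k with
  | zero => simp [sectorSphere]
  | succ k ih =>
    rw [Finset.card_eq_sum_ones, hpred.sum_sectorSphere_succ hG, pow_succ, ← ih,
      Finset.card_eq_sum_ones, Finset.sum_mul]
    refine Finset.sum_congr rfl fun v hv => ?_
    rw [← Finset.card_eq_sum_ones, one_mul,
      hpred.card_succs hG hreg (hpred.ne_of_mem_sectorSphere hG hy hv)]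

lemma IsPred.sum_sectorSphere_succ_comp_pred {M : Type*} [AddCommMonoid M]
    (hpred : IsPred G o pred) (hG : G.IsTree) (hreg : G.IsRegularOfDegree (q + 1)) (hy : y ≠ o)
    (k : ℕ) (g : V → M) :
    ∑ u ∈ sectorSphere G o y (k + 1), g (pred u) = q • ∑ v ∈ sectorSphere G o y k, g v := by
  rw [hpred.sum_sectorSphere_succ hG, Finset.smul_sum]
  refine Finset.sum_congr rfl fun v hv => ?_
  rw [Finset.sum_congr rfl fun u hu => congrArg g (hpred.pred_eq_of_mem_succs hG hu),
    Finset.sum_const, hpred.card_succs hG hreg (hpred.ne_of_mem_sectorSphere hG hy hv)]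

noncomputable def sectorFlux (G : SimpleGraph V) [G.LocallyFinite] (o y : V) (pred : V → V)
    (f : V → ℂ) (k : ℕ) : ℂ :=
  ∑ v ∈ sectorSphere G o y k, (f v - f (pred v))

lemma sectorFlux_zero (f : V → ℂ) : sectorFlux G o y pred f 0 = f y - f (pred y) := by
  simp [sectorFlux, sectorSphere]

lemma IsPred.sectorFlux_succ (hpred : IsPred G o pred) (hG : G.IsTree)
    (hreg : G.IsRegularOfDegree (q + 1)) (hy : y ≠ o) (f : V → ℂ) (k : ℕ) :
    sectorFlux G o y pred f (k + 1) =
      ∑ x ∈ sectorSphere G o y (k + 1), f x - q * ∑ x ∈ sectorSphere G o y k, f x := by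
  rw [sectorFlux, Finset.sum_sub_distrib, hpred.sum_sectorSphere_succ_comp_pred hG hreg hy,
    nsmul_eq_mul]

lemma IsPred.sum_sectorSphere_succ_of_harmonicOn (hpred : IsPred G o pred) (hG : G.IsTree)
    (hy : y ≠ o) {f : V → ℂ} (hf : ∀ v ∈ sector G o y, HarmonicAt G q f v) (k : ℕ) :
    ∑ x ∈ sectorSphere G o y (k + 1), f x =
      q * ∑ x ∈ sectorSphere G o y k, f x + sectorFlux G o y pred f k := by
  rw [hpred.sum_sectorSphere_succ hG, sectorFlux, Finset.mul_sum, ← Finset.sum_add_distrib]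
  refine Finset.sum_congr rfl fun v hv => ?_
  have hvo := hpred.ne_of_mem_sectorSphere hG hy hv
  have hfv := hf v ((hpred.mem_sectorSphere hG).1 hv).1
  rw [HarmonicAt, hpred.sum_neighborFinset hG hvo] at hfv
  linear_combination -hfv

lemma IsPred.sectorFlux_of_harmonicOn (hpred : IsPred G o pred) (hG : G.IsTree)
    (hreg : G.IsRegularOfDegree (q + 1)) (hy : y ≠ o) {f : V → ℂ}
    (hf : ∀ v ∈ sector G o y, HarmonicAt G q f v) (k : ℕ) :
    sectorFlux G o y pred f k = f y - f (pred y) := by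
  induction k with
  | zero => exact sectorFlux_zero f
  | succ k ih =>
    rw [hpred.sectorFlux_succ hG hreg hy, hpred.sum_sectorSphere_succ_of_harmonicOn hG hy hf, ih]
    ring

lemma IsPred.sum_sectorSphere_of_harmonicOn (hpred : IsPred G o pred) (hG : G.IsTree)
    (hreg : G.IsRegularOfDegree (q + 1)) (hy : y ≠ o) {f : V → ℂ}
    (hf : ∀ v ∈ sector G o y, HarmonicAt G q f v) (k : ℕ) :
    ∑ x ∈ sectorSphere G o y k, f x =
      (∑ j ∈ Finset.range (k + 1), (q : ℂ) ^ j) * f y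
        - (∑ j ∈ Finset.range k, (q : ℂ) ^ j) * f (pred y) := by
  refine (geom_sum_closed_form_iff _ _ _ (fun k => ∑ x ∈ sectorSphere G o y k, f x)).2
    ⟨by simp [sectorSphere], fun k => ?_⟩ k
  rw [hpred.sum_sectorSphere_succ_of_harmonicOn hG hy hf,
    hpred.sectorFlux_of_harmonicOn hG hreg hy hf]

section Radial

variable {f : V → ℂ}
  (hrad : ∀ x₁ x₂, x₁ ∈ sector G o y → x₂ ∈ sector G o y →
    G.dist o x₁ = G.dist o x₂ → f x₁ = f x₂)
include hrad

lemma IsPred.eq_of_mem_sectorSphere_of_radial (hpred : IsPred G o pred) (hG : G.IsTree)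
    {k : ℕ} {x₁ x₂ : V} (h₁ : x₁ ∈ sectorSphere G o y k) (h₂ : x₂ ∈ sectorSphere G o y k) :
    f x₁ = f x₂ := by
  rw [hpred.mem_sectorSphere hG] at h₁ h₂
  exact hrad x₁ x₂ h₁.1 h₂.1 (h₁.2.trans h₂.2.symm)

lemma IsPred.sectorFlux_of_radial (hpred : IsPred G o pred) (hG : G.IsTree)
    (hreg : G.IsRegularOfDegree (q + 1)) (hy : y ≠ o) {k : ℕ} {v : V}
    (hv : v ∈ sectorSphere G o y k) :
    sectorFlux G o y pred f k = q ^ k * (f v - f (pred v)) := by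
  have hconst : ∀ w ∈ sectorSphere G o y k, f w - f (pred w) = f v - f (pred v) := by
    intro w hw
    rw [hpred.eq_of_mem_sectorSphere_of_radial hrad hG hw hv]
    cases k with
    | zero =>
      rw [Finset.mem_singleton.1 hw, Finset.mem_singleton.1 hv]
    | succ k =>
      rw [hpred.eq_of_mem_sectorSphere_of_radial hrad hG (hpred.pred_mem_sectorSphere hG hw)
        (hpred.pred_mem_sectorSphere hG hv)]
  rw [sectorFlux, Finset.sum_eq_card_nsmul hconst, hpred.card_sectorSphere hG hreg hy,
    nsmul_eq_mul]
  push_cast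
  ring

lemma IsPred.harmonicAt_of_radial (hpred : IsPred G o pred) (hG : G.IsTree)
    (hreg : G.IsRegularOfDegree (q + 1)) (hq : q ≠ 0) (hy : y ≠ o)
    (hrec : ∀ k, ∑ x ∈ sectorSphere G o y (k + 1), f x =
      q * ∑ x ∈ sectorSphere G o y k, f x + (f y - f (pred y)))
    {v : V} (hv : v ∈ sector G o y) : HarmonicAt G q f v := by
  have hvk : v ∈ sectorSphere G o y (G.dist y v) := (hpred.mem_sectorSphere hG).2 ⟨hv, hv⟩
  have hvo := hpred.ne_of_mem_sectorSphere hG hy hvk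
  have hflux : ∀ k, sectorFlux G o y pred f k = f y - f (pred y) := by
    rintro (_ | k)
    · exact sectorFlux_zero f
    · rw [hpred.sectorFlux_succ hG hreg hy, hrec]
      ring
  obtain ⟨u, hu⟩ : (succs G o v).Nonempty := by
    rw [← Finset.card_pos, hpred.card_succs hG hreg hvo]
    omega
  have huk : u ∈ sectorSphere G o y (G.dist y v + 1) := Finset.mem_biUnion.2 ⟨v, hvk, hu⟩
  have hsucc : ∑ w ∈ succs G o v, f w = q * f u := by
    rw [Finset.sum_eq_card_nsmul fun w hw => hpred.eq_of_mem_sectorSphere_of_radial hrad hG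
      (Finset.mem_biUnion.2 ⟨v, hvk, hw⟩) huk, hpred.card_succs hG hreg hvo, nsmul_eq_mul]
  have h₀ := (hflux _).symm.trans (hpred.sectorFlux_of_radial hrad hG hreg hy hvk)
  have h₁ := (hflux _).symm.trans (hpred.sectorFlux_of_radial hrad hG hreg hy huk)
  rw [hpred.pred_eq_of_mem_succs hG hu] at h₁
  rw [HarmonicAt, hpred.sum_neighborFinset hG hvo, hsucc]
  have hqk : (q : ℂ) ^ G.dist y v ≠ 0 := pow_ne_zero _ (Nat.cast_ne_zero.2 hq)
  apply mul_left_cancel₀ hqk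
  linear_combination h₁ - h₀

end Radial

lemma IsPred.tsum_sector_dist_eq_sum_sectorSphere {M : Type*} [AddCommMonoid M]
    [TopologicalSpace M] (hpred : IsPred G o pred) (hG : G.IsTree) (f : V → M) (k : ℕ) :
    ∑' x : {x : V // x ∈ sector G o y ∧ G.dist o x = G.dist o y + k}, f x =
      ∑ x ∈ sectorSphere G o y k, f x := by
  rw [← Finset.tsum_subtype]
  exact (Equiv.subtypeEquivRight fun x => (hpred.mem_sectorSphere hG).symm).tsum_eq
    fun x : {x : V // x ∈ sectorSphere G o y k} => f x

end Sector

end TreeBergman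

open TreeBergman in
/-- propagation of a harmonic function on a sector, and its converse
for radial functions. -/
theorem statement1
    {V : Type*} (G : SimpleGraph V) [G.LocallyFinite] (q : ℕ) (hq : 2 ≤ q)
    (hconn : G.Connected) (hacyc : G.IsAcyclic)
    (hreg : G.IsRegularOfDegree (q + 1))
    (o : V) (pred : V → V) (hpred : IsPred G o pred)
    (y : V) (hy : y ≠ o) (f : V → ℂ) :
    ((∀ v ∈ sector G o y, HarmonicAt G q f v) →
      ∀ n : ℕ, G.dist o y ≤ n →
        ∑' x : {x : V // x ∈ sector G o y ∧ G.dist o x = n}, f x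
          = ((∑ j ∈ Finset.range (n - G.dist o y + 1), (q : ℝ) ^ j : ℝ) : ℂ) * f y
            - ((∑ j ∈ Finset.range (n - G.dist o y), (q : ℝ) ^ j : ℝ) : ℂ) * f (pred y))
    ∧
    ((∀ x₁ x₂, x₁ ∈ sector G o y → x₂ ∈ sector G o y →
        G.dist o x₁ = G.dist o x₂ → f x₁ = f x₂) →
      (∀ n : ℕ, G.dist o y ≤ n →
        ∑' x : {x : V // x ∈ sector G o y ∧ G.dist o x = n}, f x
          = ((∑ j ∈ Finset.range (n - G.dist o y + 1), (q : ℝ) ^ j : ℝ) : ℂ) * f y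
            - ((∑ j ∈ Finset.range (n - G.dist o y), (q : ℝ) ^ j : ℝ) : ℂ) * f (pred y)) →
      ∀ v ∈ sector G o y, HarmonicAt G q f v) := by
  have hG : G.IsTree := ⟨hconn, hacyc⟩
  refine ⟨fun hharm n hn => ?_, fun hrad hsum v hv => ?_⟩
  · obtain ⟨k, rfl⟩ := Nat.exists_eq_add_of_le hn
    rw [hpred.tsum_sector_dist_eq_sum_sectorSphere hG, Nat.add_sub_cancel_left]
    push_cast
    exact hpred.sum_sectorSphere_of_harmonicOn hG hreg hy hharm k
  · have hclosed : ∀ k, ∑ x ∈ sectorSphere G o y k, f x =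
        (∑ j ∈ Finset.range (k + 1), (q : ℂ) ^ j) * f y
          - (∑ j ∈ Finset.range k, (q : ℂ) ^ j) * f (pred y) := fun k => by
      have := hsum (G.dist o y + k) (Nat.le_add_right _ _)
      rw [hpred.tsum_sector_dist_eq_sum_sectorSphere hG, Nat.add_sub_cancel_left] at this
      exact_mod_cast this
    exact hpred.harmonicAt_of_radial hrad hG hreg (by omega) hy
      ((geom_sum_closed_form_iff _ _ _ _).1 hclosed).2 hv
end

section
/- Let n ∈ ℕ and let g : X → ℂ be harmonic on the ball B(o,n). Then the harmonic extension g_n^H is harmonic on all of X, coincides with g on B(o,n+1), and for every y ∈ S(o,n+1) the restriction of g_n^H to the sector T_y is radial (its value at x ∈ T_y depends only on |x|). -/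
open scoped BigOperators
open scoped Classical

/-!
A vertex `v` with `|v| = n + 1 + ℓ` has the neighbour `p(v)` one level down and `q` successors
`u` with `p(u) = v`, on all of which `g_n^H` takes the same value
`a_{ℓ+1} g(p^ℓ v) - (a_{ℓ+1} - 1) g(p^{ℓ+1} v)`. Harmonicity at `v` thus reduces to the recursion
`q (a_{ℓ+1} - a_ℓ) = q^{-ℓ} = a_ℓ - a_{ℓ-1}` (with `a_{-1} = 0`). On a sector `T_y`
with `|y| = n + 1`, the `(|x| - n - 1)`-fold predecessor of `x` is `y`, so `g_n^H(x)` depends on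
`|x|` only.
-/

open SimpleGraph

theorem SimpleGraph.IsAcyclic.eq_of_adj_of_dist_add_one_eq {V : Type*} {G : SimpleGraph V}
    (hG : G.IsAcyclic) (hconn : G.Connected) {o v u w : V} (hu : G.Adj v u) (hw : G.Adj v w)
    (hdu : G.dist o u + 1 = G.dist o v) (hdw : G.dist o w + 1 = G.dist o v) : u = w := by
  obtain ⟨P, hP, -⟩ := hconn.exists_path_of_dist o v
  -- A neighbour one level down lies on the geodesic from `o` to `v`, just before `v`.
  have eq_penultimate : ∀ x, G.Adj v x → G.dist o x + 1 = G.dist o v → x = P.penultimate := by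
    intro x hx hdx
    obtain ⟨Q, hQ, hQl⟩ := hconn.exists_path_of_dist o x
    have hvQ : v ∉ Q.support := fun hv => by
      have := (G.dist_le (Q.takeUntil v hv)).trans (Q.length_takeUntil_le_length hv)
      omega
    exact hG.eq_penultimate_of_adj_end hP hx
      (hG.mem_support_of_ne_mem_support_of_adj_of_isPath hP hQ hx hvQ)
  rw [eq_penultimate u hu hdu, eq_penultimate w hw hdw]

theorem SimpleGraph.sum_neighborFinset_eq_add_nsmul {V M : Type*} [AddCommMonoid M]
    {G : SimpleGraph V} [G.LocallyFinite] {q : ℕ} (hreg : G.IsRegularOfDegree (q + 1))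
    {v w : V} (hw : G.Adj v w) {f : V → M} {c : M} (hc : ∀ u, G.Adj v u → u ≠ w → f u = c) :
    ∑ u ∈ G.neighborFinset v, f u = f w + q • c := by
  have hmem : w ∈ G.neighborFinset v := (G.mem_neighborFinset v w).mpr hw
  rw [← Finset.add_sum_erase _ _ hmem,
    Finset.sum_congr rfl fun u hu => hc u ((G.mem_neighborFinset v u).mp
      (Finset.mem_of_mem_erase hu)) (Finset.ne_of_mem_erase hu),
    Finset.sum_const, Finset.card_erase_of_mem hmem, card_neighborFinset_eq_degree, hreg v,
    Nat.add_sub_cancel]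

namespace TreeBergman

variable {V : Type*} {G : SimpleGraph V} {o : V} {pred : V → V}

theorem IsPred.eq_of_adj_of_dist_add_one_eq (hpred : IsPred G o pred) (hconn : G.Connected)
    (hacyc : G.IsAcyclic) {v u : V} (hu : G.Adj v u) (hdu : G.dist o u + 1 = G.dist o v) :
    u = pred v := by
  have hvo : v ≠ o := by
    rintro rfl
    simp at hdu
  obtain ⟨hadj, hd⟩ := hpred v hvo
  exact hacyc.eq_of_adj_of_dist_add_one_eq hconn hu hadj hdu hd

theorem IsPred.dist_eq_add_one_of_adj_of_ne (hpred : IsPred G o pred) (hconn : G.Connected)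
    (hacyc : G.IsAcyclic) {v u : V} (hu : G.Adj v u) (hne : u ≠ pred v) :
    G.dist o u = G.dist o v + 1 :=
  (hacyc.dist_eq_dist_add_one_of_adj_of_reachable o hu (hconn o v)).resolve_left
    fun h => hne (hpred.eq_of_adj_of_dist_add_one_eq hconn hacyc hu h.symm)

theorem IsPred.apply_eq_of_adj_of_ne (hpred : IsPred G o pred) (hconn : G.Connected)
    (hacyc : G.IsAcyclic) {v u : V} (hu : G.Adj v u) (hne : u ≠ pred v) : pred u = v :=
  (hpred.eq_of_adj_of_dist_add_one_eq hconn hacyc hu.symm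
    (hpred.dist_eq_add_one_of_adj_of_ne hconn hacyc hu hne).symm).symm

theorem IsPred.iterate_dist_eq_of_mem_sector (hpred : IsPred G o pred) (hconn : G.Connected)
    (hacyc : G.IsAcyclic) {y x : V} (hx : x ∈ sector G o y) : pred^[G.dist y x] x = y := by
  suffices ∀ k x, G.dist o x = G.dist o y + k → G.dist y x = k → pred^[k] x = y from
    this _ x hx rfl
  intro k
  induction k with
  | zero =>
    intro x _ hyx
    exact (hconn.dist_eq_zero_iff.mp hyx).symm
  | succ k ih =>
    intro x hox hyx
    have hxy : x ≠ y := by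
      rintro rfl
      simp at hyx
    obtain ⟨R, -, hRl⟩ := hconn.exists_path_of_dist x y
    obtain ⟨w, hxw, R', rfl⟩ := Walk.exists_eq_cons_of_ne hxy R
    have hyw : G.dist y w ≤ k := by
      rw [dist_comm] at hRl ⊢
      have := G.dist_le R'
      simp only [Walk.length_cons] at hRl
      omega
    have hoyw : G.dist o w ≤ G.dist o y + G.dist y w := hconn.dist_triangle
    have hw : w = pred x := by
      refine hpred.eq_of_adj_of_dist_add_one_eq hconn hacyc hxw ?_
      have := hacyc.dist_eq_dist_add_one_of_adj_of_reachable o hxw (hconn o x)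
      omega
    subst hw
    have hdx := (hpred x (by rintro rfl; rw [dist_self] at hox; omega)).2
    have hoyp : G.dist o (pred x) ≤ G.dist o y + G.dist y (pred x) := hconn.dist_triangle
    rw [Function.iterate_succ_apply]
    exact ih (pred x) (by omega) (by omega)

theorem aseq_zero (q : ℕ) : aseq q 0 = 1 := by
  simp [aseq]

theorem aseq_succ (q k : ℕ) : aseq q (k + 1) = aseq q k + (q : ℝ)⁻¹ ^ (k + 1) :=
  Finset.sum_range_succ _ _

theorem natCast_mul_aseq_succ_sub {q : ℕ} (hq : q ≠ 0) (k : ℕ) :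
    (q : ℝ) * (aseq q (k + 1) - aseq q k) = (q : ℝ)⁻¹ ^ k := by
  rw [aseq_succ, add_sub_cancel_left, pow_succ', ← mul_assoc,
    mul_inv_cancel₀ (Nat.cast_ne_zero.mpr hq), one_mul]

variable {q n : ℕ} {g : V → ℂ}

theorem hext_eq_of_dist_eq {x : V} {ℓ : ℕ} (hx : G.dist o x = n + 1 + ℓ) :
    hext G o pred q g n x
      = (aseq q ℓ : ℂ) * g (pred^[ℓ] x) - ((aseq q ℓ - 1 : ℝ) : ℂ) * g (pred^[ℓ + 1] x) := by
  rw [hext, if_neg (by omega), show G.dist o x - n - 1 = ℓ by omega,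
    show G.dist o x - n = ℓ + 1 by omega]

theorem hext_of_dist_le_succ {x : V} (hx : G.dist o x ≤ n + 1) : hext G o pred q g n x = g x := by
  by_cases h : G.dist o x ≤ n
  · rw [hext, if_pos h]
  · rw [hext_eq_of_dist_eq (ℓ := 0) (by omega), aseq_zero]
    simp

/-- `a_ℓ - q^{-ℓ}` is `a_{ℓ-1}`, including the convention `a_{-1} = 0` at `ℓ = 0`. -/
theorem hext_pred_eq (hpred : IsPred G o pred) {x : V} {ℓ : ℕ} (hx : G.dist o x = n + 1 + ℓ) :
    hext G o pred q g n (pred x)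
      = ((aseq q ℓ - (q : ℝ)⁻¹ ^ ℓ : ℝ) : ℂ) * g (pred^[ℓ] x)
        - ((aseq q ℓ - (q : ℝ)⁻¹ ^ ℓ - 1 : ℝ) : ℂ) * g (pred^[ℓ + 1] x) := by
  have hdx := (hpred x (by rintro rfl; rw [dist_self] at hx; omega)).2
  cases ℓ with
  | zero =>
    rw [hext_of_dist_le_succ (by omega), aseq_zero]
    simp
  | succ k =>
    rw [hext_eq_of_dist_eq (ℓ := k) (by omega), aseq_succ, add_sub_cancel_right,
      ← Function.iterate_succ_apply, ← Function.iterate_succ_apply]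

theorem harmonicAt_hext_of_le [G.LocallyFinite] {v : V} (hg : HarmonicAt G q g v)
    (hv : G.dist o v ≤ n) : HarmonicAt G q (hext G o pred q g n) v := by
  rw [HarmonicAt, hext_of_dist_le_succ (by omega)]
  refine hg.trans (Finset.sum_congr rfl fun u hu => (hext_of_dist_le_succ ?_).symm)
  rcases ((G.mem_neighborFinset v u).mp hu).diff_dist_adj (u := o) with h | h | h <;> omega

theorem harmonicAt_hext_of_lt (hq : q ≠ 0) (hconn : G.Connected) (hacyc : G.IsAcyclic)
    [G.LocallyFinite] (hreg : G.IsRegularOfDegree (q + 1)) (hpred : IsPred G o pred) {v : V}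
    (hv : n < G.dist o v) : HarmonicAt G q (hext G o pred q g n) v := by
  obtain ⟨ℓ, hℓ⟩ : ∃ ℓ, G.dist o v = n + 1 + ℓ := ⟨G.dist o v - (n + 1), by omega⟩
  have hsucc : ∀ u, G.Adj v u → u ≠ pred v → hext G o pred q g n u
      = (aseq q (ℓ + 1) : ℂ) * g (pred^[ℓ] v)
        - ((aseq q (ℓ + 1) - 1 : ℝ) : ℂ) * g (pred^[ℓ + 1] v) := by
    intro u hu hne
    have hpu := hpred.apply_eq_of_adj_of_ne hconn hacyc hu hne
    rw [hext_eq_of_dist_eq (ℓ := ℓ + 1)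
        (by rw [hpred.dist_eq_add_one_of_adj_of_ne hconn hacyc hu hne, hℓ]; ring),
      Function.iterate_succ_apply, hpu, Function.iterate_succ_apply, hpu]
  have hrec : (q : ℂ) * ((aseq q (ℓ + 1) : ℂ) - aseq q ℓ) = (((q : ℝ)⁻¹ ^ ℓ : ℝ) : ℂ) := by
    exact_mod_cast natCast_mul_aseq_succ_sub hq ℓ
  have hadj := (hpred v (by rintro rfl; simp at hv)).1
  rw [HarmonicAt, sum_neighborFinset_eq_add_nsmul hreg hadj hsucc, nsmul_eq_mul,
    hext_pred_eq hpred hℓ, hext_eq_of_dist_eq hℓ]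
  push_cast at hrec ⊢
  linear_combination (g (pred^[ℓ + 1] v) - g (pred^[ℓ] v)) * hrec

theorem hext_eq_of_mem_sector (hpred : IsPred G o pred) (hconn : G.Connected)
    (hacyc : G.IsAcyclic) {y x : V} (hy : G.dist o y = n + 1) (hx : x ∈ sector G o y) :
    hext G o pred q g n x
      = (aseq q (G.dist y x) : ℂ) * g y - ((aseq q (G.dist y x) - 1 : ℝ) : ℂ) * g (pred y) := by
  have hxy := hpred.iterate_dist_eq_of_mem_sector hconn hacyc hx
  rw [hext_eq_of_dist_eq (hy ▸ hx : G.dist o x = n + 1 + G.dist y x), hxy,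
    Function.iterate_succ_apply', hxy]

end TreeBergman

open TreeBergman in
/-- the harmonic extension g_n^H of a function harmonic on B(o,n) is
harmonic on X, coincides with g on B(o,n+1), and is radial on each sector T_y
with y ∈ S(o,n+1). -/
theorem statement2
    {V : Type*} (G : SimpleGraph V) [G.LocallyFinite] (q : ℕ) (hq : 2 ≤ q)
    (hconn : G.Connected) (hacyc : G.IsAcyclic)
    (hreg : G.IsRegularOfDegree (q + 1))
    (o : V) (pred : V → V) (hpred : IsPred G o pred)
    (n : ℕ) (g : V → ℂ)
    (hg : ∀ v : V, G.dist o v ≤ n → HarmonicAt G q g v) :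
    Harmonic G q (hext G o pred q g n)
    ∧ (∀ x : V, G.dist o x ≤ n + 1 → hext G o pred q g n x = g x)
    ∧ (∀ y : V, G.dist o y = n + 1 →
        ∀ x₁ x₂, x₁ ∈ sector G o y → x₂ ∈ sector G o y →
          G.dist o x₁ = G.dist o x₂ →
          hext G o pred q g n x₁ = hext G o pred q g n x₂) := by
  refine ⟨fun v => ?_, fun x => hext_of_dist_le_succ, fun y hy x₁ x₂ hx₁ hx₂ hdist => ?_⟩
  · rcases le_or_gt (G.dist o v) n with hv | hv
    · exact harmonicAt_hext_of_le (hg v hv) hv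
    · exact harmonicAt_hext_of_lt (by omega) hconn hacyc hreg hpred hv
  · have hlevel : G.dist y x₁ = G.dist y x₂ := by
      have h₁ : G.dist o x₁ = G.dist o y + G.dist y x₁ := hx₁
      have h₂ : G.dist o x₂ = G.dist o y + G.dist y x₂ := hx₂
      omega
    rw [hext_eq_of_mem_sector hpred hconn hacyc hy hx₁,
      hext_eq_of_mem_sector hpred hconn hacyc hy hx₂, hlevel]
end

section
/- For every reference measure σ on X, the measure metric space (X, d, σ) is nondoubling: for every constant C > 0 there exist a vertex v ∈ X and an integer n ≥ 1 such that σ(B(v,2n)) > C σ(B(v,n)). -/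
open scoped BigOperators
open scoped Classical

/-!
Since `σ` is finite, all but `ε = σ(o) / C` of its mass lies in a finite set, hence in a ball
`B(o, n - 1)`. A tree all of whose vertices have degree at least two has vertices `v` at every
distance from `o`; taking `|v| = 2n`, the ball `B(v, n)` misses `B(o, n - 1)` and so has mass
`< σ(o) / C`, while `B(v, 2n)` contains `o`.
-/

theorem Summable.tsum_subtype_le_tsum_subtype {α : Type*} {f : α → ℝ} (hf : Summable f)
    (hf_nonneg : ∀ x, 0 ≤ f x) {p r : α → Prop} (h : ∀ x, p x → r x) :
    ∑' x : {x // p x}, f x ≤ ∑' x : {x // r x}, f x :=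
  (hf.subtype _).tsum_le_tsum_of_inj (fun x => ⟨x.1, h x.1 x.2⟩)
    (fun _ _ hxy => Subtype.ext (congrArg Subtype.val hxy :)) (fun _ _ => hf_nonneg _)
    (fun _ => le_rfl) (hf.subtype _)

namespace SimpleGraph

variable {V : Type*} {G : SimpleGraph V}

theorem IsAcyclic.dist_eq_length_of_isPath (hG : G.IsAcyclic) {u v : V} {p : G.Walk u v}
    (hp : p.IsPath) : G.dist u v = p.length := by
  obtain ⟨q, hq, hq_len⟩ := p.reachable.exists_path_of_dist
  have hqp : (⟨q, hq⟩ : G.Path u v) = ⟨p, hp⟩ := (hG.subsingleton_path u v).elim _ _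
  rw [← hq_len, Subtype.mk.inj hqp]

theorem IsAcyclic.exists_isPath_length_eq [G.LocallyFinite] (hG : G.IsAcyclic)
    (hdeg : ∀ v, 2 ≤ G.degree v) (u : V) (m : ℕ) :
    ∃ v, ∃ p : G.Walk u v, p.IsPath ∧ p.length = m := by
  induction m with
  | zero => exact ⟨u, .nil, .nil, rfl⟩
  | succ m ih =>
    obtain ⟨v, p, hp, hp_len⟩ := ih
    obtain ⟨w, hw, hw_ne⟩ := (G.neighborFinset v).exists_mem_ne (hdeg v) p.penultimate
    have hadj : G.Adj v w := (G.mem_neighborFinset v w).1 hw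
    have hw_supp : w ∉ p.support := fun hmem => hw_ne (hG.eq_penultimate_of_adj_end hp hadj hmem)
    exact ⟨w, p.concat hadj, hp.concat hw_supp hadj, by simp [hp_len]⟩

theorem IsAcyclic.exists_dist_eq [G.LocallyFinite] (hG : G.IsAcyclic)
    (hdeg : ∀ v, 2 ≤ G.degree v) (u : V) (m : ℕ) : ∃ v, G.dist u v = m := by
  obtain ⟨v, p, hp, hp_len⟩ := hG.exists_isPath_length_eq hdeg u m
  exact ⟨v, hp_len ▸ hG.dist_eq_length_of_isPath hp⟩

end SimpleGraph

open TreeBergman in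
theorem statement3_general
    {V : Type*} (G : SimpleGraph V) [G.LocallyFinite] (q : ℕ) (hq : 2 ≤ q)
    (hconn : G.Connected) (hacyc : G.IsAcyclic)
    (hreg : G.IsRegularOfDegree (q + 1))
    (o : V) (w : ℕ → ℝ) (hpos : ∀ n, 0 < w n)
    (hfin : Summable fun x : V => w (G.dist o x)) :
    ∀ C : ℝ, 0 < C → ∃ (v : V) (n : ℕ), 1 ≤ n ∧
      C * ∑' x : {x : V // G.dist v x ≤ n}, w (G.dist o x)
        < ∑' x : {x : V // G.dist v x ≤ 2 * n}, w (G.dist o x) := by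
  intro C hC
  have hw_nonneg : ∀ x : V, 0 ≤ w (G.dist o x) := fun x => (hpos _).le
  obtain ⟨s, hs⟩ := ((tendsto_order.1
    (tendsto_tsum_compl_atTop_zero fun x : V => w (G.dist o x))).2 _ (div_pos (hpos 0) hC)).exists
  set n := s.sup (G.dist o) + 1
  obtain ⟨v, hv⟩ := hacyc.exists_dist_eq (fun x => by rw [hreg x]; omega) o (2 * n)
  refine ⟨v, n, by omega, ?_⟩
  have hball_small : ∑' x : {x // G.dist v x ≤ n}, w (G.dist o x)
      ≤ ∑' x : {x // x ∉ s}, w (G.dist o x) := by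
    refine hfin.tsum_subtype_le_tsum_subtype hw_nonneg fun x hx hxs => ?_
    have htri : G.dist o v ≤ G.dist o x + G.dist x v := hconn.dist_triangle
    have hx_near : G.dist o x ≤ s.sup (G.dist o) := Finset.le_sup hxs
    rw [G.dist_comm (u := x)] at htri
    omega
  have hball_large : w 0 ≤ ∑' x : {x // G.dist v x ≤ 2 * n}, w (G.dist o x) := by
    have ho : G.dist v o ≤ 2 * n := by rw [SimpleGraph.dist_comm]; omega
    simpa using (hfin.subtype _).le_tsum ⟨o, ho⟩ fun _ _ => hw_nonneg _
  calc C * ∑' x : {x // G.dist v x ≤ n}, w (G.dist o x)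
      ≤ C * ∑' x : {x // x ∉ s}, w (G.dist o x) := by gcongr
    _ < C * (w 0 / C) := by gcongr
    _ = w 0 := by field_simp
    _ ≤ _ := hball_large

open TreeBergman in
/-- for every reference measure σ the metric measure space (X,d,σ)
is nondoubling. -/
theorem statement3
    {V : Type*} (G : SimpleGraph V) [G.LocallyFinite] (q : ℕ) (hq : 2 ≤ q)
    (hconn : G.Connected) (hacyc : G.IsAcyclic)
    (hreg : G.IsRegularOfDegree (q + 1))
    (o : V) (w : ℕ → ℝ) (hpos : ∀ n, 0 < w n) (hdec : Antitone w)
    (hfin : Summable fun x : V => w (G.dist o x)) :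
    ∀ C : ℝ, 0 < C → ∃ (v : V) (n : ℕ), 1 ≤ n ∧
      C * ∑' x : {x : V // G.dist v x ≤ n}, w (G.dist o x)
        < ∑' x : {x : V // G.dist v x ≤ 2 * n}, w (G.dist o x) :=
  statement3_general G q hq hconn hacyc hreg o w hpos hfin
end

section
/- For every α > 1, the measure metric space (X, ρ, μ_α) is globally doubling with doubling constant D_α = max{q^α + 1, (q^α + 1)/(q^α − q)}: for every v ∈ X and every r > 0, μ_α(B_ρ(v,2r)) ≤ D_α μ_α(B_ρ(v,r)), where B_ρ(v,r) = {u ∈ X : ρ(v,u) < r}. -/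
open scoped BigOperators
open scoped Classical

open TreeBergman in
/-- |v∧u|, the norm of the confluent of v and u (the Gromov product of u and v
with respect to o). -/
noncomputable def confNorm {V : Type*} (G : SimpleGraph V) (o u v : V) : ℕ :=
  (G.dist o u + G.dist o v - G.dist u v) / 2

open TreeBergman in
/-- The Gromov distance ρ(v,u) = e^{-|v∧u|} (and 0 on the diagonal). -/
noncomputable def grho {V : Type*} (G : SimpleGraph V) (o v u : V) : ℝ :=
  if u = v then 0 else Real.exp (-(confNorm G o v u : ℝ))

open TreeBergman in
/-- μ_α measure of the Gromov ball B_ρ(v,r). -/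
noncomputable def muBall {V : Type*} (G : SimpleGraph V) (q : ℕ) (o : V) (α : ℝ)
    (v : V) (r : ℝ) : ENNReal :=
  ∑' u : V, if grho G o v u < r then ENNReal.ofReal (expw q G o α u) else 0


/-!
For `0 < r` put `n = ⌊-log r⌋₊`. Since `e > 2`, the ball `B_ρ(v, 2r)` lies in the closed ball
`{u | ρ(v,u) ≤ e^{-n}}`, and the closed ball of radius `e^{-(n+1)}` lies in `B_ρ(v, r)`; so it
suffices to compare the `μ_α`-masses of consecutive closed balls. In a tree the closed ball of
radius `e^{-m}` about `v` is `{v}` if `m > |v|`, and otherwise the sector `T_w` of the vertex `w`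
of level `m` on `[o, v]`. Counting descendants generation by generation,
`μ_α(T_w) = q^{-α|w|} (1 + c_w / (q^α - q))` where `c_w` is the number of successors of `w`
(`q + 1` at the root, `q` elsewhere). Hence two consecutive sectors have mass ratio at most
`q^α + 1`, and a sector and its apex at most `(q^α + 1) / (q^α - q)`.
-/

namespace SimpleGraph

variable {V : Type*} {G : SimpleGraph V}

lemma exists_adj_dist_add_one_eq {x v : V} (h : G.dist x v ≠ 0) :
    ∃ p, G.Adj v p ∧ G.dist x p + 1 = G.dist x v := by
  rw [dist_comm] at h
  obtain ⟨W, hW⟩ := exists_walk_of_dist_ne_zero h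
  have hnil : ¬W.Nil := by
    rw [← Walk.length_eq_zero_iff]
    omega
  have hadj := W.adj_snd hnil
  refine ⟨W.snd, hadj, ?_⟩
  have htail : G.dist W.snd x ≤ W.tail.length := dist_le W.tail
  have hlen := W.length_tail_add_one hnil
  have htri := hadj.symm.reachable.dist_triangle_right x
  rw [dist_eq_one_iff_adj.2 hadj.symm] at htri
  have := dist_comm (G := G) (u := x) (v := W.snd)
  have := dist_comm (G := G) (u := x) (v := v)
  omega

lemma IsAcyclic.eq_of_adj_of_dist_lt (hG : G.IsAcyclic) {x v p₁ p₂ : V}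
    (h₁ : G.Adj v p₁) (h₂ : G.Adj v p₂)
    (hd₁ : G.dist x p₁ < G.dist x v) (hd₂ : G.dist x p₂ < G.dist x v) : p₁ = p₂ := by
  have hreach : G.Reachable x v := Reachable.of_dist_ne_zero (by omega)
  obtain ⟨W, hW, -⟩ := hreach.exists_path_of_dist
  have eq_penultimate : ∀ p, G.Adj v p → G.dist x p < G.dist x v → p = W.penultimate := by
    intro p hadj hp
    obtain ⟨Q, hQ, hQlen⟩ := (hreach.trans hadj.reachable).exists_path_of_dist
    have hv : v ∉ Q.support := fun hv => by
      have := (dist_le (Q.takeUntil v hv)).trans (Q.length_takeUntil_le_length hv)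
      omega
    exact hG.eq_penultimate_of_adj_end hW hadj
      (hG.mem_support_of_ne_mem_support_of_adj_of_isPath hW hQ hadj hv)
  rw [eq_penultimate p₁ h₁ hd₁, eq_penultimate p₂ h₂ hd₂]

/-- If `x` lies on the side of `v'` of the edge `vv'` and `u` on the side of `v`, the geodesic
from `x` to `u` passes through `v`. -/
lemma IsTree.dist_eq_dist_add_dist_of_adj (hG : G.IsTree) {x u v v' : V} (hadj : G.Adj v v')
    (hx : G.dist x v' < G.dist x v) (hu : G.dist u v < G.dist u v') :
    G.dist x u = G.dist x v + G.dist v u := by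
  induction h : G.dist u v generalizing v v' with
  | zero =>
    obtain rfl : u = v := (hG.connected u v).dist_eq_zero_iff.1 h
    simp
  | succ n ih =>
    have hne : G.dist u v ≠ 0 := by omega
    obtain ⟨z, hvz, hz⟩ := exists_adj_dist_add_one_eq hne
    have hzv' : z ≠ v' := by rintro rfl; omega
    have hzx : G.dist x z = G.dist x v + 1 := by
      refine (hG.dist_eq_dist_add_one_of_adj x hvz).resolve_left fun h' => hzv' ?_
      exact hG.isAcyclic.eq_of_adj_of_dist_lt hvz hadj (by omega) hx
    have hzu := dist_comm (G := G) (u := z) (v := u)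
    have hvu := dist_comm (G := G) (u := v) (v := u)
    have := ih hvz.symm (by omega) (by omega)
    omega

end SimpleGraph

open scoped ENNReal in
lemma ENNReal.tsum_indicator_eq_tsum_sum {β : Type*} (A : Set β) (g : β → ℕ)
    (s : ℕ → Finset β) (hs : ∀ k x, x ∈ s k ↔ x ∈ A ∧ g x = k) (f : β → ℝ≥0∞) :
    ∑' x, A.indicator f x = ∑' k, ∑ x ∈ s k, f x := by
  rw [← ENNReal.tsum_fiberwise _ g]
  refine tsum_congr fun k => ?_
  have hfiber : g ⁻¹' {k} ∩ A = s k := by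
    ext x
    simp [hs, and_comm]
  rw [tsum_subtype, Set.indicator_indicator, hfiber, sum_eq_tsum_indicator]

namespace TreeBergman

open SimpleGraph

variable {V : Type*} {G : SimpleGraph V} {q : ℕ} {o : V} {α : ℝ}

lemma le_confNorm_iff (hconn : G.Connected) {v u : V} {m : ℕ} :
    m ≤ confNorm G o v u ↔ G.dist v u + 2 * m ≤ G.dist o v + G.dist o u := by
  have htri : G.dist o u ≤ G.dist o v + G.dist v u := hconn.dist_triangle
  have hvu : G.dist v u ≤ G.dist v o + G.dist o u := hconn.dist_triangle
  rw [dist_comm (u := v) (v := o)] at hvu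
  rw [confNorm, Nat.le_div_iff_mul_le two_pos]
  omega

lemma setOf_dist_le_confNorm_eq_sector (hconn : G.Connected) (v : V) :
    {u | G.dist o v ≤ confNorm G o v u} = sector G o v := by
  ext u
  have htri : G.dist o u ≤ G.dist o v + G.dist v u := hconn.dist_triangle
  simp only [Set.mem_ofPred_eq, le_confNorm_iff hconn, sector]
  omega

lemma le_confNorm_iff_of_adj (hG : G.IsTree) {v v' : V} (hadj : G.Adj v v')
    (hv : G.dist o v' < G.dist o v) {m : ℕ} (hm : m < G.dist o v) (u : V) :
    m ≤ confNorm G o v u ↔ m ≤ confNorm G o v' u := by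
  have hv' : G.dist o v = G.dist o v' + 1 := by
    have := hG.dist_eq_dist_add_one_of_adj o hadj
    omega
  rw [le_confNorm_iff hG.connected, le_confNorm_iff hG.connected,
    dist_comm (u := v), dist_comm (u := v')]
  rcases hG.dist_eq_dist_add_one_of_adj u hadj with h | h
  · omega
  · have := hG.dist_eq_dist_add_dist_of_adj hadj hv (by omega : G.dist u v < G.dist u v')
    rw [dist_comm (u := v)] at this
    omega

lemma exists_setOf_le_confNorm_eq_sector (hG : G.IsTree) (m : ℕ) :
    ∀ k (v : V), G.dist o v = m + k →
      ∃ w, G.dist o w = m ∧ {u | m ≤ confNorm G o v u} = sector G o w := by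
  intro k
  induction k with
  | zero =>
    intro v hv
    rw [Nat.add_zero] at hv
    exact ⟨v, hv, hv ▸ setOf_dist_le_confNorm_eq_sector hG.connected v⟩
  | succ k ih =>
    intro v hv
    obtain ⟨v', hadj, hv'⟩ := exists_adj_dist_add_one_eq (G := G) (x := o) (v := v) (by omega)
    obtain ⟨w, hw, hsector⟩ := ih v' (by omega)
    refine ⟨w, hw, ?_⟩
    rw [← hsector]
    ext u
    exact le_confNorm_iff_of_adj hG hadj (by omega) (by omega) u

/-- The closed `ρ`-ball of radius `e^{-m}` about `v`. -/
def rhoClosedBall (G : SimpleGraph V) (o v : V) (m : ℕ) : Set V :=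
  {u | u = v ∨ m ≤ confNorm G o v u}

lemma setOf_grho_lt_two_mul_subset (v : V) {r : ℝ} (hr : 0 < r) :
    {u | grho G o v u < 2 * r} ⊆ rhoClosedBall G o v ⌊-Real.log r⌋₊ := by
  intro u hu
  by_cases huv : u = v
  · exact Or.inl huv
  refine Or.inr (not_lt.1 fun hlt => ?_)
  set c : ℝ := (confNorm G o v u : ℝ)
  have hle : ((confNorm G o v u + 1 : ℕ) : ℝ) ≤ -Real.log r :=
    (Nat.le_floor_iff' (Nat.succ_ne_zero _)).1 hlt
  push_cast at hle
  have hu' : Real.exp (-c) < 2 * r := by simpa [grho, huv] using hu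
  have : 2 * r ≤ Real.exp (-c) :=
    calc 2 * r ≤ 2 * Real.exp (-c - 1) := by
          gcongr
          rw [← Real.exp_log hr]
          exact Real.exp_le_exp.2 (by linarith)
      _ ≤ Real.exp 1 * Real.exp (-c - 1) := by gcongr; exact Real.exp_one_gt_two.le
      _ = Real.exp (-c) := by rw [← Real.exp_add]; ring_nf
  linarith

lemma rhoClosedBall_subset_setOf_grho_lt (v : V) {r : ℝ} (hr : 0 < r) :
    rhoClosedBall G o v (⌊-Real.log r⌋₊ + 1) ⊆ {u | grho G o v u < r} := by
  rintro u (rfl | hu)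
  · simpa [grho] using hr
  have hu' : (⌊-Real.log r⌋₊ : ℝ) + 1 ≤ confNorm G o v u := by exact_mod_cast hu
  have hfloor := Nat.lt_floor_add_one (-Real.log r)
  simp only [Set.mem_ofPred_eq, grho]
  split_ifs
  · exact hr
  rw [← Real.exp_log hr]
  exact Real.exp_lt_exp.2 (by linarith)

lemma rhoClosedBall_eq_singleton (hconn : G.Connected) {v : V} {m : ℕ} (hm : G.dist o v < m) :
    rhoClosedBall G o v m = {v} := by
  ext u
  have htri : G.dist o u ≤ G.dist o v + G.dist v u := hconn.dist_triangle
  simp only [rhoClosedBall, Set.mem_ofPred_eq, Set.mem_singleton_iff, le_confNorm_iff hconn]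
  exact ⟨fun h => h.resolve_right (by omega), Or.inl⟩

lemma exists_rhoClosedBall_eq_sector (hG : G.IsTree) {v : V} {m : ℕ} (hm : m ≤ G.dist o v) :
    ∃ w, G.dist o w = m ∧ rhoClosedBall G o v m = sector G o w := by
  obtain ⟨w, hw, hsector⟩ :=
    exists_setOf_le_confNorm_eq_sector hG m _ v (Nat.add_sub_of_le hm).symm
  refine ⟨w, hw, ?_⟩
  rw [← hsector]
  ext u
  simp only [rhoClosedBall, Set.mem_ofPred_eq, or_iff_right_iff_imp]
  rintro rfl
  rw [le_confNorm_iff hG.connected, SimpleGraph.dist_self]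
  omega

section Generations

variable [G.LocallyFinite]

lemma card_succs_le (v : V) : (succs G o v).card ≤ G.degree v :=
  (Finset.card_filter_le _ _).trans_eq (card_neighborFinset_eq_degree G v)

lemma card_succs_add_one (hG : G.IsTree) {v : V} (hv : v ≠ o) :
    (succs G o v).card + 1 = G.degree v := by
  obtain ⟨p, hp, hpv⟩ := exists_adj_dist_add_one_eq (G := G) (x := o) (v := v)
    ((hG.connected o v).pos_dist_of_ne hv.symm).ne'
  have hsuccs : succs G o v = (G.neighborFinset v).erase p := by
    ext y
    simp only [succs, Finset.mem_filter, Finset.mem_erase, mem_neighborFinset]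
    constructor
    · rintro ⟨hy, hdist⟩
      exact ⟨by rintro rfl; omega, hy⟩
    · rintro ⟨hyp, hy⟩
      refine ⟨hy, (hG.dist_eq_dist_add_one_of_adj o hy).resolve_left fun h => hyp ?_⟩
      exact hG.isAcyclic.eq_of_adj_of_dist_lt (x := o) hy hp (by omega) (by omega)
  rw [hsuccs, Finset.card_erase_add_one ((mem_neighborFinset _ _ _).2 hp),
    card_neighborFinset_eq_degree]

lemma card_succs_of_ne (hG : G.IsTree) (hreg : G.IsRegularOfDegree (q + 1)) {v : V}
    (hv : v ≠ o) : (succs G o v).card = q := by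
  have := card_succs_add_one hG hv
  rw [hreg v] at this
  omega

noncomputable def generation (G : SimpleGraph V) [G.LocallyFinite] (o w : V) : ℕ → Finset V
  | 0 => {w}
  | k + 1 => (generation G o w k).biUnion (succs G o)

lemma dist_of_mem_generation {w x : V} {k : ℕ} (hx : x ∈ generation G o w k) :
    G.dist o x = G.dist o w + k := by
  induction k generalizing x with
  | zero => simp_all [generation]
  | succ k ih =>
    simp only [generation, Finset.mem_biUnion, succs, Finset.mem_filter] at hx
    obtain ⟨u, hu, -, hxu⟩ := hx
    rw [hxu, ih hu, add_assoc]

lemma mem_generation_iff (hG : G.IsTree) {w x : V} {k : ℕ} :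
    x ∈ generation G o w k ↔ x ∈ sector G o w ∧ G.dist w x = k := by
  induction k generalizing x with
  | zero =>
    simp only [generation, Finset.mem_singleton, sector, Set.mem_ofPred_eq,
      (hG.connected w x).dist_eq_zero_iff]
    constructor
    · rintro rfl
      simp
    · exact fun h => h.2.symm
  | succ k ih =>
    simp only [generation, Finset.mem_biUnion, succs, Finset.mem_filter, mem_neighborFinset, ih,
      sector, Set.mem_ofPred_eq]
    constructor
    · rintro ⟨u, ⟨hu, huk⟩, hux, hx⟩
      have h1 : G.dist w x ≤ G.dist w u + G.dist u x := hG.connected.dist_triangle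
      have h2 : G.dist o x ≤ G.dist o w + G.dist w x := hG.connected.dist_triangle
      rw [dist_eq_one_iff_adj.2 hux] at h1
      omega
    · rintro ⟨hx, hxk⟩
      obtain ⟨z, hxz, hz⟩ := exists_adj_dist_add_one_eq (G := G) (x := w) (v := x) (by omega)
      have h1 : G.dist o z ≤ G.dist o w + G.dist w z := hG.connected.dist_triangle
      have h2 := hG.dist_eq_dist_add_one_of_adj o hxz
      exact ⟨z, ⟨by omega, by omega⟩, hxz.symm, by omega⟩

lemma card_generation_succ (hG : G.IsTree) (hreg : G.IsRegularOfDegree (q + 1))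
    (w : V) (k : ℕ) : (generation G o w (k + 1)).card = (succs G o w).card * q ^ k := by
  induction k with
  | zero => simp [generation]
  | succ k ih =>
    have hdisj : ((generation G o w (k + 1) : Set V)).PairwiseDisjoint (succs G o) := by
      intro u₁ _ u₂ _ hne
      refine Finset.disjoint_left.2 fun y hy₁ hy₂ => hne ?_
      simp only [succs, Finset.mem_filter, mem_neighborFinset] at hy₁ hy₂
      exact hG.isAcyclic.eq_of_adj_of_dist_lt (x := o) hy₁.1.symm hy₂.1.symm
        (by omega) (by omega)
    have hcard : ∀ u ∈ generation G o w (k + 1), (succs G o u).card = q := by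
      intro u hu
      refine card_succs_of_ne hG hreg fun huo => ?_
      have := dist_of_mem_generation hu
      rw [huo, SimpleGraph.dist_self] at this
      omega
    rw [generation, Finset.card_biUnion hdisj, Finset.sum_congr rfl hcard, Finset.sum_const, ih,
      smul_eq_mul, pow_succ, mul_assoc]

end Generations

lemma natCast_lt_rpow (hq : 1 < q) (hα : 1 < α) : (q : ℝ) < (q : ℝ) ^ α := by
  simpa using Real.rpow_lt_rpow_of_exponent_lt (by exact_mod_cast hq : (1 : ℝ) < q) hα

noncomputable def muSet (G : SimpleGraph V) (q : ℕ) (o : V) (α : ℝ) (A : Set V) : ENNReal :=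
  ∑' u, A.indicator (fun u => ENNReal.ofReal (expw q G o α u)) u

lemma muBall_eq_muSet (v : V) (r : ℝ) :
    muBall G q o α v r = muSet G q o α {u | grho G o v u < r} :=
  rfl

lemma muSet_mono {A B : Set V} (h : A ⊆ B) : muSet G q o α A ≤ muSet G q o α B :=
  ENNReal.tsum_le_tsum fun _ => Set.indicator_le_indicator_of_subset h (fun _ => zero_le) _

lemma expw_eq (x : V) : expw q G o α x = ((q : ℝ) ^ α)⁻¹ ^ G.dist o x := by
  rw [expw, neg_mul_eq_neg_mul, Real.rpow_mul_natCast (Nat.cast_nonneg q),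
    Real.rpow_neg (Nat.cast_nonneg q)]

lemma muSet_singleton (v : V) :
    muSet G q o α {v} = ENNReal.ofReal (((q : ℝ) ^ α)⁻¹ ^ G.dist o v) := by
  simp [muSet, expw_eq]

section Sectors

variable [G.LocallyFinite]

lemma hasSum_card_generation_mul_inv_pow (hG : G.IsTree) (hreg : G.IsRegularOfDegree (q + 1))
    {β : ℝ} (hβ : (q : ℝ) < β) (w : V) :
    HasSum (fun k => ((generation G o w k).card : ℝ) * β⁻¹ ^ (G.dist o w + k))
      (β⁻¹ ^ G.dist o w * (1 + (succs G o w).card / (β - q))) := by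
  set m := G.dist o w
  set c : ℝ := ((succs G o w).card : ℝ)
  have hβ0 : β ≠ 0 := by linarith
  have hβq : β - q ≠ 0 := by linarith
  have hqβ : (q : ℝ) * β⁻¹ < 1 := by
    rw [← div_eq_mul_inv, div_lt_one (by linarith)]
    exact hβ
  have hterm : (fun k => ((generation G o w (k + 1)).card : ℝ) * β⁻¹ ^ (m + (k + 1)))
      = fun k => c * β⁻¹ ^ (m + 1) * (q * β⁻¹) ^ k := by
    funext k
    rw [card_generation_succ hG hreg]
    push_cast
    ring
  have hgeom := (hasSum_geometric_of_lt_one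
    (mul_nonneg (Nat.cast_nonneg q) (inv_nonneg.2 (by linarith))) hqβ).mul_left (c * β⁻¹ ^ (m + 1))
  rw [← hterm] at hgeom
  convert HasSum.zero_add (f := fun k => ((generation G o w k).card : ℝ) * β⁻¹ ^ (m + k)) hgeom
    using 1
  rw [show 1 - q * β⁻¹ = (β - q) / β by field_simp]
  simp only [generation, Finset.card_singleton, Nat.cast_one, add_zero, pow_succ]
  field_simp

lemma muSet_sector (hG : G.IsTree) (hreg : G.IsRegularOfDegree (q + 1))
    (hq : 1 < q) (hα : 1 < α) (w : V) :
    muSet G q o α (sector G o w) = ENNReal.ofReal (((q : ℝ) ^ α)⁻¹ ^ G.dist o w *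
      (1 + (succs G o w).card / ((q : ℝ) ^ α - q))) := by
  have hsum := hasSum_card_generation_mul_inv_pow (o := o) hG hreg (natCast_lt_rpow hq hα) w
  have hlevel : ∀ k, ∑ x ∈ generation G o w k, ENNReal.ofReal (expw q G o α x)
      = ENNReal.ofReal ((generation G o w k).card * ((q : ℝ) ^ α)⁻¹ ^ (G.dist o w + k)) := by
    intro k
    rw [Finset.sum_congr rfl fun x hx => by rw [expw_eq, dist_of_mem_generation hx],
      Finset.sum_const, nsmul_eq_mul, ENNReal.ofReal_mul (Nat.cast_nonneg _),
      ENNReal.ofReal_natCast]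
  rw [muSet, ENNReal.tsum_indicator_eq_tsum_sum (sector G o w) (G.dist w) (generation G o w)
      (fun k x => mem_generation_iff hG), tsum_congr hlevel,
    ← ENNReal.ofReal_tsum_of_nonneg (fun k => by positivity) hsum.summable, hsum.tsum_eq]

lemma muSet_sector_le (hG : G.IsTree) (hreg : G.IsRegularOfDegree (q + 1))
    (hq : 1 < q) (hα : 1 < α) (w : V) :
    muSet G q o α (sector G o w) ≤ ENNReal.ofReal (((q : ℝ) ^ α)⁻¹ ^ G.dist o w *
      (((q : ℝ) ^ α + 1) / ((q : ℝ) ^ α - q))) := by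
  have hβ := natCast_lt_rpow hq hα
  have hc : ((succs G o w).card : ℝ) ≤ q + 1 := by
    exact_mod_cast (card_succs_le w).trans_eq (hreg w)
  rw [muSet_sector hG hreg hq hα]
  refine ENNReal.ofReal_le_ofReal (mul_le_mul_of_nonneg_left ?_ (by positivity))
  rw [one_add_div (by linarith)]
  exact div_le_div_of_nonneg_right (by linarith) (by linarith)

lemma muSet_rhoClosedBall_le (hG : G.IsTree) (hreg : G.IsRegularOfDegree (q + 1))
    (hq : 1 < q) (hα : 1 < α) (v : V) (n : ℕ) :
    muSet G q o α (rhoClosedBall G o v n) ≤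
      ENNReal.ofReal (max ((q : ℝ) ^ α + 1) (((q : ℝ) ^ α + 1) / ((q : ℝ) ^ α - q))) *
        muSet G q o α (rhoClosedBall G o v (n + 1)) := by
  set β := (q : ℝ) ^ α
  set D := max (β + 1) ((β + 1) / (β - q))
  have hβ : (q : ℝ) < β := natCast_lt_rpow hq hα
  have hβq : 0 < β - q := by linarith
  have hβ0 : β ≠ 0 := by linarith
  have hD : 1 ≤ D := (by linarith : (1 : ℝ) ≤ β + 1).trans (le_max_left _ _)
  rcases lt_or_ge (G.dist o v) n with hlt | hle
  · rw [rhoClosedBall_eq_singleton hG.connected hlt,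
      rhoClosedBall_eq_singleton hG.connected (by omega)]
    refine le_mul_of_one_le_left zero_le ?_
    simpa using ENNReal.ofReal_le_ofReal hD
  obtain ⟨w, hw, hball⟩ := exists_rhoClosedBall_eq_sector hG hle
  rw [hball]
  refine (muSet_sector_le hG hreg hq hα w).trans ?_
  rw [hw]
  rcases hle.lt_or_eq with hlt | rfl
  · obtain ⟨w', hw', hball'⟩ := exists_rhoClosedBall_eq_sector hG (Nat.succ_le_of_lt hlt)
    have hw'o : w' ≠ o := by rintro rfl; simp at hw'
    rw [hball', muSet_sector hG hreg hq hα, hw', card_succs_of_ne hG hreg hw'o,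
      ← ENNReal.ofReal_mul (by positivity)]
    refine ENNReal.ofReal_le_ofReal ?_
    have hmass : β⁻¹ ^ (n + 1) * (1 + q / (β - q)) = β⁻¹ ^ n / (β - q) := by
      rw [one_add_div hβq.ne', sub_add_cancel, pow_succ, mul_assoc, ← mul_div_assoc,
        inv_mul_cancel₀ hβ0, one_div, div_eq_mul_inv]
    calc β⁻¹ ^ n * ((β + 1) / (β - q)) = (β + 1) * (β⁻¹ ^ n / (β - q)) := by ring
      _ ≤ D * (β⁻¹ ^ (n + 1) * (1 + q / (β - q))) := by
        rw [hmass]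
        gcongr
        exact le_max_left _ _
  · rw [rhoClosedBall_eq_singleton hG.connected (Nat.lt_succ_self _), muSet_singleton,
      ← ENNReal.ofReal_mul (by positivity)]
    refine ENNReal.ofReal_le_ofReal ?_
    rw [mul_comm D]
    gcongr
    exact le_max_right _ _

end Sectors

end TreeBergman

open TreeBergman in
/-- (X, ρ, μ_α) is globally doubling with doubling constant
D_α = max{q^α+1, (q^α+1)/(q^α−q)}. -/
theorem statement16
    {V : Type*} (G : SimpleGraph V) [G.LocallyFinite] (q : ℕ) (hq : 2 ≤ q)
    (hconn : G.Connected) (hacyc : G.IsAcyclic)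
    (hreg : G.IsRegularOfDegree (q + 1))
    (o : V) (α : ℝ) (hα : 1 < α) :
    ∀ (v : V) (r : ℝ), 0 < r →
      muBall G q o α v (2 * r)
        ≤ ENNReal.ofReal
            (max ((q : ℝ) ^ α + 1) (((q : ℝ) ^ α + 1) / ((q : ℝ) ^ α - q)))
          * muBall G q o α v r := by
  intro v r hr
  have hG : G.IsTree := ⟨hconn, hacyc⟩
  rw [muBall_eq_muSet, muBall_eq_muSet]
  calc muSet G q o α {u | grho G o v u < 2 * r}
      ≤ muSet G q o α (rhoClosedBall G o v ⌊-Real.log r⌋₊) :=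
        muSet_mono (setOf_grho_lt_two_mul_subset v hr)
    _ ≤ _ * muSet G q o α (rhoClosedBall G o v (⌊-Real.log r⌋₊ + 1)) :=
        muSet_rhoClosedBall_le hG hreg hq hα v _
    _ ≤ _ :=
        mul_le_mul_right (muSet_mono (rhoClosedBall_subset_setOf_grho_lt v hr)) _
end
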